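/- arXiv:math/0610836 — 6 statements merged into one kernel-verified Lean document; each statement's English description precedes it below -/
import Mathlib

section
/- Let 𝒜 : ℤ^n → 𝒫(ℝ^d_{≥0}) be superadditive, let B ∈ ℤ^{n×n}, v ∈ ℤ^n, W ∈ ℝ^n, and for i = 1,…,k let κⁱ be Minkowski-additive, antitone functionals with κⁱ(∅) = +∞, hᵢ ∈ ℝ^n, δᵢ ∈ ℝ. Let {z̄ʲ}_{j∈J} ⊆ ℤ^n be a finite family with 𝒜(z̄ʲ) ≠ ∅ for all j ∈ J. If λ ∈ ℤ_{≥0}^J is not identically zero and satisfies Σ_{j∈J} λ_j (B z̄ʲ) = v and Σ_{j∈J} λ_j [κⁱ(𝒜(z̄ʲ)) + hᵢᵀ z̄ʲ] ≤ δᵢ for every i = 1,…,k, then the point z* = Σ_{j∈J} λ_j z̄ʲ satisfies: 𝒜(z*) ≠ ∅, B z* = v, κⁱ(𝒜(z*)) + hᵢᵀ z* ≤ δᵢ for every i, and the objective values agree: Wᵀ z* = Σ_{j∈J} λ_j (Wᵀ z̄ʲ). -/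
/-!
Since `𝒜 (z₁ + z₂) ⊇ 𝒜 z₁ + 𝒜 z₂`, the set `𝒜 (z₁ + z₂)` is nonempty whenever both summands
are, and antitonicity followed by Minkowski-additivity gives
`κ (𝒜 (z₁ + z₂)) ≤ κ (𝒜 z₁) + κ (𝒜 z₂)`. Writing `z* = Σ_j λ_j z̄ʲ` as a sum of `Σ_j λ_j ≥ 1`
copies of the `z̄ʲ`, both facts propagate to `z*`; the equality constraint and the objective
are linear in `λ`.
-/

open Pointwise

section SumNsmul

variable {ι M N : Type*} [Fintype ι] [AddCommMonoid M]

theorem Finset.sum_nsmul_eq_sum_sigma_fin (lam : ι → ℕ) (g : ι → M) :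
    ∑ i, lam i • g i = ∑ x : Σ i, Fin (lam i), g x.1 := by
  simp [Fintype.sum_sigma]

theorem Finset.univ_sigma_fin_nonempty {lam : ι → ℕ} (hlam : lam ≠ 0) :
    (Finset.univ : Finset (Σ i, Fin (lam i))).Nonempty := by
  obtain ⟨i, hi⟩ := Function.ne_iff.mp hlam
  exact ⟨⟨i, ⟨0, Nat.pos_of_ne_zero hi⟩⟩, Finset.mem_univ _⟩

theorem Finset.sum_nsmul_induction_of_ne_zero (p : M → Prop)
    (hom : ∀ a b, p a → p b → p (a + b)) {lam : ι → ℕ} (hlam : lam ≠ 0) (g : ι → M)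
    (base : ∀ i, p (g i)) : p (∑ i, lam i • g i) := by
  rw [Finset.sum_nsmul_eq_sum_sigma_fin]
  exact Finset.sum_induction_nonempty _ p hom (Finset.univ_sigma_fin_nonempty hlam)
    fun x _ => base x.1

theorem Finset.le_sum_nsmul_of_subadditive [AddCommMonoid N] [Preorder N] [IsOrderedAddMonoid N]
    (f : M → N) (h_add : ∀ x y, f (x + y) ≤ f x + f y) {lam : ι → ℕ} (hlam : lam ≠ 0)
    (g : ι → M) : f (∑ i, lam i • g i) ≤ ∑ i, lam i • f (g i) := by
  rw [Finset.sum_nsmul_eq_sum_sigma_fin, Finset.sum_nsmul_eq_sum_sigma_fin]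
  exact Finset.le_sum_nonempty_of_subadditive f h_add (Finset.univ_sigma_fin_nonempty hlam) _

end SumNsmul

section Superadditive

variable {M E N : Type*} [Add M] [Add E] {𝒜 : M → Set E}

theorem nonempty_add_of_superadditive (hsuper : ∀ z₁ z₂, 𝒜 z₁ + 𝒜 z₂ ⊆ 𝒜 (z₁ + z₂))
    {z₁ z₂ : M} (h₁ : (𝒜 z₁).Nonempty) (h₂ : (𝒜 z₂).Nonempty) : (𝒜 (z₁ + z₂)).Nonempty :=
  (h₁.add h₂).mono (hsuper z₁ z₂)

theorem map_superadditive_add_le [Add N] [LE N] {κ : Set E → N} (C : Set E) (hC : C + C ⊆ C)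
    (h𝒜C : ∀ z, 𝒜 z ⊆ C) (hsuper : ∀ z₁ z₂, 𝒜 z₁ + 𝒜 z₂ ⊆ 𝒜 (z₁ + z₂))
    (hκadd : ∀ S T, S ⊆ C → T ⊆ C → κ (S + T) = κ S + κ T)
    (hκanti : ∀ S T, S ⊆ C → T ⊆ C → S ⊆ T → κ T ≤ κ S) (z₁ z₂ : M) :
    κ (𝒜 (z₁ + z₂)) ≤ κ (𝒜 z₁) + κ (𝒜 z₂) :=
  calc κ (𝒜 (z₁ + z₂)) ≤ κ (𝒜 z₁ + 𝒜 z₂) :=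
        hκanti _ _ ((Set.add_subset_add (h𝒜C z₁) (h𝒜C z₂)).trans hC) (h𝒜C _) (hsuper z₁ z₂)
    _ = κ (𝒜 z₁) + κ (𝒜 z₂) := hκadd _ _ (h𝒜C z₁) (h𝒜C z₂)

end Superadditive

theorem sum_mul_intCast_sum_nsmul {ι J R : Type*} [Fintype ι] [Fintype J] [CommRing R]
    (w : ι → R) (lam : J → ℕ) (z : J → ι → ℤ) :
    ∑ l, w l * ((∑ j, lam j • z j) l : R) = ∑ j, (lam j : R) * ∑ l, w l * (z j l : R) := by
  simp only [Finset.sum_apply, Pi.smul_apply]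
  simp only [nsmul_eq_mul, Int.cast_sum, Int.cast_mul, Int.cast_natCast, Finset.mul_sum]
  rw [Finset.sum_comm]
  exact Finset.sum_congr rfl fun _ _ => Finset.sum_congr rfl fun _ _ => by ring

theorem imp_of_ip_feasible_general
    {n d k : ℕ} {J : Type} [Fintype J]
    -- the superadditive set-valued map with values in the nonnegative orthant of ℝ^d
    (𝒜 : (Fin n → ℤ) → Set (Fin d → ℝ))
    (hApos : ∀ z, ∀ x ∈ 𝒜 z, ∀ i, 0 ≤ x i)
    (hsuper : ∀ z₁ z₂ : Fin n → ℤ, 𝒜 z₁ + 𝒜 z₂ ⊆ 𝒜 (z₁ + z₂))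
    (B : Matrix (Fin n) (Fin n) ℤ) (v : Fin n → ℤ) (W : Fin n → ℝ)
    -- the functionals κⁱ, with values in ℝ ∪ {+∞}
    (κ : Fin k → Set (Fin d → ℝ) → WithTop ℝ)
    -- Minkowski-additivity on subsets of the nonnegative orthant
    (hκadd : ∀ (i : Fin k) (S T : Set (Fin d → ℝ)),
      (∀ x ∈ S, ∀ j, 0 ≤ x j) → (∀ x ∈ T, ∀ j, 0 ≤ x j) →
      κ i (S + T) = κ i S + κ i T)
    -- antitonicity on subsets of the nonnegative orthant
    (hκanti : ∀ (i : Fin k) (S T : Set (Fin d → ℝ)),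
      (∀ x ∈ S, ∀ j, 0 ≤ x j) → (∀ x ∈ T, ∀ j, 0 ≤ x j) →
      S ⊆ T → κ i T ≤ κ i S)
    (h : Fin k → Fin n → ℝ) (δ : Fin k → ℝ)
    -- the finite family {z̄ʲ} with 𝒜(z̄ʲ) ≠ ∅
    (zbar : J → Fin n → ℤ) (hzbar : ∀ j, (𝒜 (zbar j)).Nonempty)
    -- a not identically zero feasible solution of the integer linear program
    (lam : J → ℕ) (hlam : lam ≠ 0)
    (hB : ∑ j, lam j • B.mulVec (zbar j) = v)
    (hineq : ∀ i : Fin k,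
      ∑ j, lam j • (κ i (𝒜 (zbar j)) + ((∑ l, h i l * (zbar j l : ℝ)) : WithTop ℝ))
        ≤ ((δ i : ℝ) : WithTop ℝ))
    (zstar : Fin n → ℤ) (hzstar : zstar = ∑ j, lam j • zbar j) :
    (𝒜 zstar).Nonempty ∧
    B.mulVec zstar = v ∧
    (∀ i : Fin k,
      κ i (𝒜 zstar) + ((∑ l, h i l * (zstar l : ℝ)) : WithTop ℝ) ≤ ((δ i : ℝ) : WithTop ℝ)) ∧
    (∑ l, W l * (zstar l : ℝ)) = ∑ j, (lam j : ℝ) * ∑ l, W l * (zbar j l : ℝ) := by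
  have horthant : {x : Fin d → ℝ | ∀ j, 0 ≤ x j} + {x | ∀ j, 0 ≤ x j} ⊆ {x | ∀ j, 0 ≤ x j} := by
    rintro _ ⟨x, hx, y, hy, rfl⟩ j
    exact add_nonneg (hx j) (hy j)
  have hobj (w : Fin n → ℝ) := hzstar ▸ sum_mul_intCast_sum_nsmul w lam zbar
  refine ⟨hzstar ▸ Finset.sum_nsmul_induction_of_ne_zero (fun z => (𝒜 z).Nonempty)
      (fun _ _ => nonempty_add_of_superadditive hsuper) hlam zbar hzbar,
    by rw [hzstar, ← hB, Matrix.mulVec_sum]; simp only [Matrix.mulVec_smul], fun i => ?_, hobj W⟩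
  have hκ : κ i (𝒜 zstar) ≤ ∑ j, lam j • κ i (𝒜 (zbar j)) :=
    hzstar ▸ Finset.le_sum_nsmul_of_subadditive (fun z => κ i (𝒜 z))
      (map_superadditive_add_le _ horthant hApos hsuper (hκadd i) (hκanti i)) hlam zbar
  simp only [← WithTop.coe_mul, ← WithTop.coe_sum] at hineq ⊢
  calc _ ≤ ∑ j, lam j • (κ i (𝒜 (zbar j)) + ((∑ l, h i l * (zbar j l : ℝ) : ℝ) : WithTop ℝ)) := by
        rw [hobj, WithTop.coe_sum]
        simp only [smul_add, Finset.sum_add_distrib, ← nsmul_eq_mul, WithTop.coe_nsmul]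
        exact add_le_add_left hκ _
    _ ≤ δ i := hineq i

/-- Theorem (IP ↔ IMP), first direction: a feasible solution `λ` of the integer linear
program gives a feasible solution `z* = Σ_j λ_j z̄ʲ` of the (mixed-)integer Minkowski
program, with the same objective value. -/
theorem imp_of_ip_feasible
    {n d k : ℕ} {J : Type} [Fintype J]
    -- the superadditive set-valued map with values in the nonnegative orthant of ℝ^d
    (𝒜 : (Fin n → ℤ) → Set (Fin d → ℝ))
    (hApos : ∀ z, ∀ x ∈ 𝒜 z, ∀ i, 0 ≤ x i)
    (hsuper : ∀ z₁ z₂ : Fin n → ℤ, 𝒜 z₁ + 𝒜 z₂ ⊆ 𝒜 (z₁ + z₂))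
    (B : Matrix (Fin n) (Fin n) ℤ) (v : Fin n → ℤ) (W : Fin n → ℝ)
    -- the functionals κⁱ, with values in ℝ ∪ {+∞}
    (κ : Fin k → Set (Fin d → ℝ) → WithTop ℝ)
    (hκempty : ∀ i, κ i ∅ = ⊤)
    -- Minkowski-additivity on subsets of the nonnegative orthant
    (hκadd : ∀ (i : Fin k) (S T : Set (Fin d → ℝ)),
      (∀ x ∈ S, ∀ j, 0 ≤ x j) → (∀ x ∈ T, ∀ j, 0 ≤ x j) →
      κ i (S + T) = κ i S + κ i T)
    -- antitonicity on subsets of the nonnegative orthant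
    (hκanti : ∀ (i : Fin k) (S T : Set (Fin d → ℝ)),
      (∀ x ∈ S, ∀ j, 0 ≤ x j) → (∀ x ∈ T, ∀ j, 0 ≤ x j) →
      S ⊆ T → κ i T ≤ κ i S)
    (h : Fin k → Fin n → ℝ) (δ : Fin k → ℝ)
    -- the finite family {z̄ʲ} with 𝒜(z̄ʲ) ≠ ∅
    (zbar : J → Fin n → ℤ) (hzbar : ∀ j, (𝒜 (zbar j)).Nonempty)
    -- a not identically zero feasible solution of the integer linear program
    (lam : J → ℕ) (hlam : lam ≠ 0)
    (hB : ∑ j, lam j • B.mulVec (zbar j) = v)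
    (hineq : ∀ i : Fin k,
      ∑ j, lam j • (κ i (𝒜 (zbar j)) + ((∑ l, h i l * (zbar j l : ℝ)) : WithTop ℝ))
        ≤ ((δ i : ℝ) : WithTop ℝ))
    (zstar : Fin n → ℤ) (hzstar : zstar = ∑ j, lam j • zbar j) :
    (𝒜 zstar).Nonempty ∧
    B.mulVec zstar = v ∧
    (∀ i : Fin k,
      κ i (𝒜 zstar) + ((∑ l, h i l * (zstar l : ℝ)) : WithTop ℝ) ≤ ((δ i : ℝ) : WithTop ℝ)) ∧
    (∑ l, W l * (zstar l : ℝ)) = ∑ j, (lam j : ℝ) * ∑ l, W l * (zbar j l : ℝ) :=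
  imp_of_ip_feasible_general 𝒜 hApos hsuper B v W κ hκadd hκanti h δ zbar hzbar lam hlam hB hineq
    zstar hzstar
end

section
/- Let 𝒜 : ℤ^n → 𝒫(ℝ^d_{≥0}) be superadditive, let B ∈ ℤ^{n×n}, v ∈ ℤ^n, W ∈ ℝ^n, and for i = 1,…,k let κⁱ be Minkowski-additive, antitone functionals with κⁱ(∅) = +∞, hᵢ ∈ ℝ^n, δᵢ ∈ ℝ. Let {z̄ʲ}_{j∈J} ⊆ ℤ^n be a finite family with 𝒜(z̄ʲ) ≠ ∅ for all j ∈ J. Suppose z̃ ∈ ℤ^n satisfies 𝒜(z̃) ≠ ∅, B z̃ = v, and κⁱ(𝒜(z̃)) + hᵢᵀ z̃ ≤ δᵢ for every i = 1,…,k, and suppose β ∈ ℤ_{≥0}^J is a decomposition with z̃ = Σ_{j∈J} β_j z̄ʲ and 𝒜(z̃) = Σ_{j∈J} β_j 𝒜(z̄ʲ) (Minkowski sum). Then β satisfies the integer linear program constraints: Σ_{j∈J} β_j (B z̄ʲ) = v and Σ_{j∈J} β_j [κⁱ(𝒜(z̄ʲ)) + hᵢᵀ z̄ʲ] ≤ δᵢ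 for every i, and the objective values agree: Wᵀ z̃ = Σ_{j∈J} β_j (Wᵀ z̄ʲ). -/
open Pointwise

/-- `minkSMul m S` is the `m`-fold Minkowski sum of the set `S` with itself,
with the convention `minkSMul 0 S = {0}`. -/
def minkSMul {α : Type*} [AddMonoid α] : ℕ → Set α → Set α
  | 0, _ => {0}
  | m + 1, S => S + minkSMul m S

/-! Additivity of `κ` on sets of nonnegative vectors makes it a monoid homomorphism from
Minkowski sums as soon as `κ {0} = 0`, and this follows by cancellation from
`κ (𝒜 z̃) = κ (𝒜 z̃ + {0}) = κ (𝒜 z̃) + κ {0}`, since feasibility of `z̃` forces `κ (𝒜 z̃) < ⊤`.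
Then `κ (𝒜 z̃) = Σ_j β_j κ (𝒜 z̄ʲ)`, and the linear terms `B z`, `hᵢᵀ z`, `Wᵀ z` are additive
in the decomposition `z̃ = Σ_j β_j z̄ʲ`. -/

section Minkowski

variable {α : Type*} [AddCommMonoid α]

def IsMinkowskiAdditiveOn {β : Type*} [Add β] (κ : Set α → β) (M : AddSubmonoid α) : Prop :=
  ∀ S T : Set α, S ⊆ M → T ⊆ M → κ (S + T) = κ S + κ T

variable {M : AddSubmonoid α}

lemma minkSMul_subset {S : Set α} (hS : S ⊆ M) : ∀ m, minkSMul m S ⊆ M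
  | 0 => by simp [minkSMul, M.zero_mem]
  | m + 1 => by
    rintro _ ⟨x, hx, y, hy, rfl⟩
    exact M.add_mem (hS hx) (minkSMul_subset hS m hy)

lemma finsetSum_subset_addSubmonoid {ι : Type*} {s : Finset ι} {S : ι → Set α}
    (hS : ∀ i ∈ s, S i ⊆ M) : ∑ i ∈ s, S i ⊆ M := by
  intro a ha
  obtain ⟨g, hg, rfl⟩ := (Set.mem_finsetSum s S a).1 ha
  exact M.sum_mem fun i hi => hS i hi (hg hi)

namespace IsMinkowskiAdditiveOn

lemma map_zero_of_ne_top {γ : Type*} [AddMonoid γ] [IsLeftCancelAdd γ]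
    {κ : Set α → WithTop γ} (hκ : IsMinkowskiAdditiveOn κ M) {S : Set α} (hS : S ⊆ M)
    (hκS : κ S ≠ ⊤) : κ 0 = 0 := by
  have h := hκ S 0 hS (by simp [M.zero_mem])
  rw [add_zero] at h
  exact WithTop.add_left_cancel hκS (h.symm.trans (add_zero _).symm)

variable {β : Type*} [AddCommMonoid β] {κ : Set α → β}

lemma map_minkSMul (hκ : IsMinkowskiAdditiveOn κ M) (h0 : κ 0 = 0) {S : Set α}
    (hS : S ⊆ M) : ∀ m, κ (minkSMul m S) = m • κ S
  | 0 => by rw [zero_smul]; exact h0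
  | m + 1 => by
    rw [minkSMul, hκ _ _ hS (minkSMul_subset hS m), map_minkSMul hκ h0 hS m, succ_nsmul']

lemma map_finsetSum (hκ : IsMinkowskiAdditiveOn κ M) (h0 : κ 0 = 0) {ι : Type*}
    (s : Finset ι) {S : ι → Set α} (hS : ∀ i ∈ s, S i ⊆ M) :
    κ (∑ i ∈ s, S i) = ∑ i ∈ s, κ (S i) := by
  classical
  induction s using Finset.induction_on with
  | empty => simpa using h0
  | insert a s ha ih =>
    have hSs : ∀ i ∈ s, S i ⊆ M := fun i hi => hS i (Finset.mem_insert_of_mem hi)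
    rw [Finset.sum_insert ha, Finset.sum_insert ha,
      hκ _ _ (hS a (Finset.mem_insert_self a s)) (finsetSum_subset_addSubmonoid hSs), ih hSs]

lemma map_finsetSum_minkSMul (hκ : IsMinkowskiAdditiveOn κ M) (h0 : κ 0 = 0) {ι : Type*}
    (s : Finset ι) (β : ι → ℕ) {S : ι → Set α} (hS : ∀ i ∈ s, S i ⊆ M) :
    κ (∑ i ∈ s, minkSMul (β i) (S i)) = ∑ i ∈ s, β i • κ (S i) := by
  rw [hκ.map_finsetSum h0 s fun i hi => minkSMul_subset (hS i hi) (β i)]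
  exact Finset.sum_congr rfl fun i hi => hκ.map_minkSMul h0 (hS i hi) (β i)

end IsMinkowskiAdditiveOn

end Minkowski

lemma sum_mul_intCast_finsetSum_nsmul {ι J : Type*} [Fintype ι] (w : ι → ℝ) (s : Finset J)
    (β : J → ℕ) (z : J → ι → ℤ) :
    ∑ l, w l * (((∑ j ∈ s, β j • z j) l : ℤ) : ℝ) =
      ∑ j ∈ s, (β j : ℝ) * ∑ l, w l * (z j l : ℝ) := by
  simp only [Finset.sum_apply, nsmul_eq_mul, Int.cast_sum, Int.cast_mul,
    Int.cast_natCast, Finset.mul_sum, Pi.mul_apply, Pi.natCast_apply]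
  rw [Finset.sum_comm]
  exact Finset.sum_congr rfl fun j _ => Finset.sum_congr rfl fun l _ => by ring

lemma mulVec_finsetSum_nsmul {m n J : Type*} [Fintype n] (B : Matrix m n ℤ) (s : Finset J)
    (β : J → ℕ) (z : J → n → ℤ) :
    B.mulVec (∑ j ∈ s, β j • z j) = ∑ j ∈ s, β j • B.mulVec (z j) := by
  simp_rw [Matrix.mulVec_sum, Matrix.mulVec_smul]

lemma WithTop.finsetSum_nsmul_add_coe {γ J : Type*} [AddCommMonoid γ] (s : Finset J)
    (β : J → ℕ) (a : J → WithTop γ) (c : J → γ) :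
    ∑ j ∈ s, β j • (a j + c j) = ∑ j ∈ s, β j • a j + ↑(∑ j ∈ s, β j • c j) := by
  simp only [smul_add, Finset.sum_add_distrib, WithTop.coe_sum, WithTop.coe_nsmul]

theorem ip_of_imp_feasible_general
    {n d k : ℕ} {J : Type} [Fintype J]
    -- the superadditive set-valued map with values in the nonnegative orthant of ℝ^d
    (𝒜 : (Fin n → ℤ) → Set (Fin d → ℝ))
    (hApos : ∀ z, ∀ x ∈ 𝒜 z, ∀ i, 0 ≤ x i)
    (B : Matrix (Fin n) (Fin n) ℤ) (v : Fin n → ℤ) (W : Fin n → ℝ)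
    -- the functionals κⁱ, with values in ℝ ∪ {+∞}
    (κ : Fin k → Set (Fin d → ℝ) → WithTop ℝ)
    -- Minkowski-additivity on subsets of the nonnegative orthant
    (hκadd : ∀ (i : Fin k) (S T : Set (Fin d → ℝ)),
      (∀ x ∈ S, ∀ j, 0 ≤ x j) → (∀ x ∈ T, ∀ j, 0 ≤ x j) →
      κ i (S + T) = κ i S + κ i T)
    (h : Fin k → Fin n → ℝ) (δ : Fin k → ℝ)
    -- the finite family {z̄ʲ} with 𝒜(z̄ʲ) ≠ ∅
    (zbar : J → Fin n → ℤ)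
    -- a feasible solution z̃ of the integer Minkowski program
    (ztilde : Fin n → ℤ)
    (hBz : B.mulVec ztilde = v)
    (hz : ∀ i : Fin k,
      κ i (𝒜 ztilde) + ((∑ l, h i l * (ztilde l : ℝ)) : WithTop ℝ) ≤ ((δ i : ℝ) : WithTop ℝ))
    -- the decomposition β of z̃
    (β : J → ℕ)
    (hdecz : ztilde = ∑ j, β j • zbar j)
    (hdecA : 𝒜 ztilde = ∑ j, minkSMul (β j) (𝒜 (zbar j))) :
    (∑ j, β j • B.mulVec (zbar j) = v) ∧
    (∀ i : Fin k,
      ∑ j, β j • (κ i (𝒜 (zbar j)) + ((∑ l, h i l * (zbar j l : ℝ)) : WithTop ℝ))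
        ≤ ((δ i : ℝ) : WithTop ℝ)) ∧
    (∑ l, W l * (ztilde l : ℝ)) = ∑ j, (β j : ℝ) * ∑ l, W l * (zbar j l : ℝ) := by
  have hA : ∀ z, 𝒜 z ⊆ AddSubmonoid.nonneg (Fin d → ℝ) := fun z x hx => hApos z x hx
  have hcoe : ∀ (i : Fin k) (z : Fin n → ℤ),
      ((∑ l, h i l * (z l : ℝ)) : WithTop ℝ) = ((∑ l, h i l * (z l : ℝ) : ℝ) : WithTop ℝ) := by
    intro i z
    -- the statement forms these sums in `WithTop ℝ`, termwise
    push_cast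
    rfl
  refine ⟨by rw [← mulVec_finsetSum_nsmul, ← hdecz, hBz], fun i => ?_,
    by rw [hdecz, sum_mul_intCast_finsetSum_nsmul]⟩
  have hκ : IsMinkowskiAdditiveOn (κ i) (AddSubmonoid.nonneg (Fin d → ℝ)) :=
    fun S T hS hT => hκadd i S T (fun x hx => hS hx) (fun x hx => hT hx)
  have h0 : κ i 0 = 0 := hκ.map_zero_of_ne_top (hA ztilde)
    (WithTop.add_ne_top.1 (ne_top_of_le_ne_top WithTop.coe_ne_top (hz i))).1
  calc ∑ j, β j • (κ i (𝒜 (zbar j)) + ((∑ l, h i l * (zbar j l : ℝ)) : WithTop ℝ))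
      = κ i (𝒜 ztilde) + ((∑ l, h i l * (ztilde l : ℝ)) : WithTop ℝ) := by
        simp only [hcoe, WithTop.finsetSum_nsmul_add_coe, nsmul_eq_mul]
        rw [hdecA, hκ.map_finsetSum_minkSMul h0 _ _ fun j _ => hA (zbar j), hdecz,
          sum_mul_intCast_finsetSum_nsmul]
    _ ≤ δ i := hz i

/-- Theorem (IP ↔ IMP), second direction: a feasible solution `z̃` of the (mixed-)integer
Minkowski program together with a decomposition `z̃ = Σ_j β_j z̄ʲ`,
`𝒜(z̃) = Σ_j β_j 𝒜(z̄ʲ)` gives a feasible solution `β` of the integer linear program,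
with the same objective value. -/
theorem ip_of_imp_feasible
    {n d k : ℕ} {J : Type} [Fintype J]
    -- the superadditive set-valued map with values in the nonnegative orthant of ℝ^d
    (𝒜 : (Fin n → ℤ) → Set (Fin d → ℝ))
    (hApos : ∀ z, ∀ x ∈ 𝒜 z, ∀ i, 0 ≤ x i)
    (hsuper : ∀ z₁ z₂ : Fin n → ℤ, 𝒜 z₁ + 𝒜 z₂ ⊆ 𝒜 (z₁ + z₂))
    (B : Matrix (Fin n) (Fin n) ℤ) (v : Fin n → ℤ) (W : Fin n → ℝ)
    -- the functionals κⁱ, with values in ℝ ∪ {+∞}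
    (κ : Fin k → Set (Fin d → ℝ) → WithTop ℝ)
    (hκempty : ∀ i, κ i ∅ = ⊤)
    -- Minkowski-additivity on subsets of the nonnegative orthant
    (hκadd : ∀ (i : Fin k) (S T : Set (Fin d → ℝ)),
      (∀ x ∈ S, ∀ j, 0 ≤ x j) → (∀ x ∈ T, ∀ j, 0 ≤ x j) →
      κ i (S + T) = κ i S + κ i T)
    -- antitonicity on subsets of the nonnegative orthant
    (hκanti : ∀ (i : Fin k) (S T : Set (Fin d → ℝ)),
      (∀ x ∈ S, ∀ j, 0 ≤ x j) → (∀ x ∈ T, ∀ j, 0 ≤ x j) →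
      S ⊆ T → κ i T ≤ κ i S)
    (h : Fin k → Fin n → ℝ) (δ : Fin k → ℝ)
    -- the finite family {z̄ʲ} with 𝒜(z̄ʲ) ≠ ∅
    (zbar : J → Fin n → ℤ) (hzbar : ∀ j, (𝒜 (zbar j)).Nonempty)
    -- a feasible solution z̃ of the integer Minkowski program
    (ztilde : Fin n → ℤ)
    (hne : (𝒜 ztilde).Nonempty)
    (hBz : B.mulVec ztilde = v)
    (hz : ∀ i : Fin k,
      κ i (𝒜 ztilde) + ((∑ l, h i l * (ztilde l : ℝ)) : WithTop ℝ) ≤ ((δ i : ℝ) : WithTop ℝ))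
    -- the decomposition β of z̃
    (β : J → ℕ)
    (hdecz : ztilde = ∑ j, β j • zbar j)
    (hdecA : 𝒜 ztilde = ∑ j, minkSMul (β j) (𝒜 (zbar j))) :
    (∑ j, β j • B.mulVec (zbar j) = v) ∧
    (∀ i : Fin k,
      ∑ j, β j • (κ i (𝒜 (zbar j)) + ((∑ l, h i l * (zbar j l : ℝ)) : WithTop ℝ))
        ≤ ((δ i : ℝ) : WithTop ℝ)) ∧
    (∑ l, W l * (ztilde l : ℝ)) = ∑ j, (β j : ℝ) * ∑ l, W l * (zbar j l : ℝ) :=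
  ip_of_imp_feasible_general 𝒜 hApos B v W κ hκadd h δ zbar ztilde hBz hz β hdecz hdecA
end

section
/- Let 𝒜 : ℤ^n → 𝒫(ℝ^d_{≥0}) be a set-valued map and let 𝒞 be a set of vectors in ℝ^d. Suppose z = z₁ + z₂ with z₁, z₂ ∈ ℤ^n and 𝒜(z) = 𝒜(z₁) + 𝒜(z₂) (Minkowski sum). Then the truncated sets satisfy tr_𝒞(𝒜(z)) ⊆ tr_𝒞(𝒜(z₁)) + tr_𝒞(𝒜(z₂)). Consequently, if the truncated set tr_𝒞(𝒜(z)) is indecomposable (there exist no z₁, z₂ ∈ ℤ^n ∖ {0} with z = z₁ + z₂ and tr_𝒞(𝒜(z)) ⊆ tr_𝒞(𝒜(z₁)) + tr_𝒞(𝒜(z₂))), then 𝒜(z) is indecomposable (there exist no z₁, z₂ ∈ ℤ^n ∖ {0} with z = z₁ + z₂ and 𝒜(z) = 𝒜(z₁) + 𝒜(z₂)). -/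
open Pointwise

/-- `u` reduces `v`, written `u ⊑ v`: componentwise `u⁽ⁱ⁾v⁽ⁱ⁾ ≥ 0` and `|u⁽ⁱ⁾| ≤ |v⁽ⁱ⁾|`. -/
def Reduces {ι : Type*} (u v : ι → ℝ) : Prop :=
  ∀ i, 0 ≤ u i * v i ∧ |u i| ≤ |v i|

/-- The truncation `tr_𝒞(S)` of a set `S` with respect to a set of vectors `𝒞`. -/
def trunc {ι : Type*} (C : Set (ι → ℝ)) (S : Set (ι → ℝ)) : Set (ι → ℝ) :=
  {x ∈ S | ¬ ∃ c ∈ C, Reduces c x}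

lemma reduces_add_right {ι : Type*} {c x₁ x₂ : ι → ℝ}
    (h1 : ∀ i, 0 ≤ x₁ i) (h2 : ∀ i, 0 ≤ x₂ i) (h : Reduces c x₁) :
    Reduces c (x₁ + x₂) := by
  intro i
  obtain ⟨hp, ha⟩ := h i
  have hx1 := h1 i
  have hx2 := h2 i
  have hc : 0 ≤ c i := by
    rcases lt_or_ge (c i) 0 with hlt | hle
    · have : x₁ i = 0 := by nlinarith
      rw [this, abs_zero] at ha
      nlinarith [abs_nonneg (c i), abs_pos.mpr hlt.ne]
    · exact hle
  constructor
  · simp only [Pi.add_apply]; nlinarith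
  · rw [abs_of_nonneg hc] at ha
    rw [abs_of_nonneg hx1] at ha
    simp only [Pi.add_apply]
    rw [abs_of_nonneg hc, abs_of_nonneg (by linarith : (0:ℝ) ≤ x₁ i + x₂ i)]
    linarith

/-- If `z = z₁ + z₂` and `𝒜(z) = 𝒜(z₁) + 𝒜(z₂)` (Minkowski sum), then
`tr_𝒞(𝒜(z)) ⊆ tr_𝒞(𝒜(z₁)) + tr_𝒞(𝒜(z₂))`.  Consequently, if `tr_𝒞(𝒜(z))` is
indecomposable then `𝒜(z)` is indecomposable. -/
theorem trunc_subset_of_decomp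
    {n d : ℕ}
    (𝒜 : (Fin n → ℤ) → Set (Fin d → ℝ))
    -- all values of 𝒜 lie in the nonnegative orthant
    (hApos : ∀ z, ∀ x ∈ 𝒜 z, ∀ i, 0 ≤ x i)
    (C : Set (Fin d → ℝ)) (z : Fin n → ℤ) :
    (∀ z₁ z₂ : Fin n → ℤ, z = z₁ + z₂ → 𝒜 z = 𝒜 z₁ + 𝒜 z₂ →
      trunc C (𝒜 z) ⊆ trunc C (𝒜 z₁) + trunc C (𝒜 z₂)) ∧
    ((¬ ∃ z₁ z₂ : Fin n → ℤ, z₁ ≠ 0 ∧ z₂ ≠ 0 ∧ z = z₁ + z₂ ∧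
        trunc C (𝒜 z) ⊆ trunc C (𝒜 z₁) + trunc C (𝒜 z₂)) →
      ¬ ∃ z₁ z₂ : Fin n → ℤ, z₁ ≠ 0 ∧ z₂ ≠ 0 ∧ z = z₁ + z₂ ∧
        𝒜 z = 𝒜 z₁ + 𝒜 z₂) := by
  have main : ∀ z₁ z₂ : Fin n → ℤ, z = z₁ + z₂ → 𝒜 z = 𝒜 z₁ + 𝒜 z₂ →
      trunc C (𝒜 z) ⊆ trunc C (𝒜 z₁) + trunc C (𝒜 z₂) := by
    intro z₁ z₂ _ hsum x hx
    obtain ⟨hxA, hxnc⟩ := hx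
    rw [hsum] at hxA
    obtain ⟨x₁, hx₁, x₂, hx₂, rfl⟩ := hxA
    have h1 := hApos z₁ x₁ hx₁
    have h2 := hApos z₂ x₂ hx₂
    refine ⟨x₁, ⟨hx₁, ?_⟩, x₂, ⟨hx₂, ?_⟩, rfl⟩
    · rintro ⟨c, hc, hr⟩
      refine hxnc ⟨c, hc, ?_⟩
      show Reduces c (x₁ + x₂)
      exact reduces_add_right h1 h2 hr
    · rintro ⟨c, hc, hr⟩
      refine hxnc ⟨c, hc, ?_⟩
      show Reduces c (x₁ + x₂)
      rw [add_comm]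
      exact reduces_add_right h2 h1 hr
  refine ⟨main, fun h ⟨z₁, z₂, h1, h2, h3, h4⟩ =>
    h ⟨z₁, z₂, h1, h2, h3, main z₁ z₂ h3 h4⟩⟩
end

section
/- Let M ⊆ ℤ^d be a finitely generated additive monoid and let A ∈ ℤ^{d×n} be a matrix. Then there are only finitely many fibers of A that are atomic with respect to M; that is, the collection of sets {P^I_{A,b} : b ∈ M and P^I_{A,b} is atomic w.r.t. M} is finite. -/
open Pointwise

/-- The fiber `P^I_{A,b} = {z ∈ ℤ^n : z ≥ 0, Az = b}` of `b` under the matrix `A`. -/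
def fiber {d n : ℕ} (A : Matrix (Fin d) (Fin n) ℤ) (b : Fin d → ℤ) : Set (Fin n → ℤ) :=
  {z | 0 ≤ z ∧ A.mulVec z = b}

/-- A fiber `P^I_{A,b}` with `b ∈ M` is atomic w.r.t. the monoid `M` if there is no
decomposition `b = b₁ + b₂` with `b₁, b₂ ∈ M ∖ {0}` and
`P^I_{A,b} = P^I_{A,b₁} + P^I_{A,b₂}` (Minkowski sum). -/
def IsAtomicFiber {d n : ℕ} (A : Matrix (Fin d) (Fin n) ℤ) (M : AddSubmonoid (Fin d → ℤ))
    (b : Fin d → ℤ) : Prop :=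
  b ∈ M ∧ ¬ ∃ b₁ b₂ : Fin d → ℤ, b₁ ∈ M ∧ b₂ ∈ M ∧ b₁ ≠ 0 ∧ b₂ ≠ 0 ∧ b = b₁ + b₂ ∧
    fiber A b = fiber A b₁ + fiber A b₂

/-!
Order `M` by `b ≤ b' ↔ b' - b ∈ M`, a well-quasi-order by Dickson's lemma since `M` is a
quotient of `ℕ^k`, and order upper sets of `ℕ^n` by reverse inclusion, a well-quasi-order by
Maclagan's theorem (which follows from Higman's lemma by induction on `n`). If `b ≤ b'` and the
upper closure of `P^I_{A,b'}` lies in that of `P^I_{A,b}`, then every point of `P^I_{A,b'}`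
dominates a point of `P^I_{A,b}`, whence `P^I_{A,b'} = P^I_{A,b} + P^I_{A,b'-b}`. So two distinct
nonzero atomic `b` are never comparable in the product order, and there are only finitely many.
-/

theorem List.SublistForall₂.exists_of_mem {α β : Type*} {R : α → β → Prop} {l₁ : List α}
    {l₂ : List β} (h : List.SublistForall₂ R l₁ l₂) {a : α} (ha : a ∈ l₁) : ∃ b ∈ l₂, R a b := by
  induction h with
  | nil => simp at ha
  | cons hab _ ih =>
    rcases List.mem_cons.1 ha with rfl | ha
    · exact ⟨_, List.mem_cons_self, hab⟩
    · obtain ⟨b, hb, hr⟩ := ih ha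
      exact ⟨b, List.mem_cons_of_mem _ hb, hr⟩
  | cons_right _ ih =>
    obtain ⟨b, hb, hr⟩ := ih ha
    exact ⟨b, List.mem_cons_of_mem _ hb, hr⟩

theorem wellQuasiOrdered_sublistForall₂ {α : Type*} [Preorder α] [WellQuasiOrderedLE α] :
    WellQuasiOrdered (List.SublistForall₂ (α := α) (· ≤ ·)) := by
  rw [← Set.partiallyWellOrderedOn_univ_iff]
  simpa using (Set.partiallyWellOrderedOn_univ_iff.2 (wellQuasiOrdered_le (α := α)))
    |>.partiallyWellOrderedOn_sublistForall₂ (· ≤ ·)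

theorem WellQuasiOrdered.finite_image {α β : Type*} {r : α → α → Prop}
    (hr : WellQuasiOrdered r) {s : Set α} {f : α → β}
    (hf : ∀ a ∈ s, ∀ a' ∈ s, r a a' → f a = f a') : (f '' s).Finite :=
  IsAntichain.finite_of_partiallyWellOrderedOn (r := Eq) (fun _ _ _ _ hne heq => hne heq)
    ((Set.partiallyWellOrderedOn_of_wellQuasiOrdered hr s).image_of_monotone_on hf)

open AddSubmonoid in
theorem AddSubmonoid.FG.wellQuasiOrdered_sub_mem {G : Type*} [AddCommGroup G]
    {M : AddSubmonoid G} (hM : M.FG) : WellQuasiOrdered fun b b' : M => (b' : G) - b ∈ M := by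
  obtain ⟨S, rfl⟩ := hM
  let σ : (S → ℕ) → closure (S : Set G) := fun μ =>
    ⟨∑ i, μ i • i.1, mem_closure_finset'.2 ⟨μ, rfl⟩⟩
  refine wellQuasiOrdered_le.of_surjective ⟨σ, fun {μ μ'} h => ?_⟩ fun b => ?_
  · refine mem_closure_finset'.2 ⟨μ' - μ, sub_eq_iff_eq_add'.2 ?_⟩
    rw [← Finset.sum_add_distrib]
    exact Finset.sum_congr rfl fun i _ => by
      rw [← add_smul, Pi.sub_apply, add_tsub_cancel_of_le (h i)]
  · obtain ⟨μ, hμ⟩ := mem_closure_finset'.1 b.2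
    exact ⟨μ, Subtype.ext hμ.symm⟩

namespace UpperSet
variable {β : Type*} [Preorder β]

def slice (U : UpperSet (ℕ × β)) (t : ℕ) : UpperSet β :=
  ⟨Prod.mk t ⁻¹' U, U.upper.preimage fun _ _ h => Prod.mk_le_mk.2 ⟨le_rfl, h⟩⟩

theorem slice_antitone (U : UpperSet (ℕ × β)) : Antitone U.slice :=
  fun _ _ h _ hx => U.upper (Prod.mk_le_mk.2 ⟨h, le_rfl⟩) hx

theorem le_iff_forall_slice_le {U V : UpperSet (ℕ × β)} : U ≤ V ↔ ∀ t, U.slice t ≤ V.slice t := by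
  simp only [← coe_subset_coe, Set.subset_def, Prod.forall]
  rfl

theorem wellQuasiOrderedLE_nat_prod [WellQuasiOrderedLE (UpperSet β)] :
    WellQuasiOrderedLE (UpperSet (ℕ × β)) := by
  refine ⟨fun f => ?_⟩
  -- Each `f i` is determined by its slices up to the index `N i` where they stabilise; compare
  -- these finite lists of slices with Higman's lemma.
  choose N hN using fun i => WellFoundedLT.antitone_chain_condition (f i).slice_antitone
  let g : ℕ → UpperSet β × List (ℕ × UpperSet β) := fun i =>
    ((f i).slice (N i), (List.range (N i + 1)).map fun t => (t, (f i).slice t))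
  obtain ⟨i, j, hij, hlim, hlist⟩ :=
    (wellQuasiOrdered_le.prod wellQuasiOrdered_sublistForall₂) g
  refine ⟨i, j, hij, le_iff_forall_slice_le.2 fun t => ?_⟩
  have hj : (f j).slice (N j) ≤ (f j).slice t := by
    rcases le_total t (N j) with h | h
    · exact (f j).slice_antitone h
    · exact (hN j t h).le
  rcases le_or_gt t (N i) with ht | ht
  · obtain ⟨_, hq, hle⟩ := hlist.exists_of_mem (a := (t, (f i).slice t))
      (List.mem_map.2 ⟨t, List.mem_range.2 (Nat.lt_succ_of_le ht), rfl⟩)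
    obtain ⟨q, -, rfl⟩ := List.mem_map.1 hq
    exact hle.2.trans ((f j).slice_antitone hle.1)
  · exact (hN i t ht.le).symm.le.trans (hlim.trans hj)

instance wellQuasiOrderedLE_pi_fin_nat (m : ℕ) : WellQuasiOrderedLE (UpperSet (Fin m → ℕ)) := by
  induction m with
  | zero =>
    have : Finite (UpperSet (Fin 0 → ℕ)) := Finite.of_injective _ SetLike.coe_injective
    exact Finite.to_wellQuasiOrderedLE
  | succ m ih =>
    exact (map (Fin.consOrderIso fun _ => ℕ)).wellQuasiOrderedLE_iff.1 wellQuasiOrderedLE_nat_prod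

end UpperSet

section Fiber
variable {d n : ℕ} (A : Matrix (Fin d) (Fin n) ℤ)

def fiberUpperClosure (b : Fin d → ℤ) : UpperSet (Fin n → ℕ) :=
  upperClosure ((fun y i => (y i : ℤ)) ⁻¹' fiber A b)

variable {A}

theorem exists_le_of_fiberUpperClosure_le {b b' : Fin d → ℤ}
    (h : fiberUpperClosure A b ≤ fiberUpperClosure A b') {z' : Fin n → ℤ} (hz' : z' ∈ fiber A b') :
    ∃ z ∈ fiber A b, z ≤ z' := by
  have hcast : (fun i => ((z' i).toNat : ℤ)) = z' := funext fun i => Int.toNat_of_nonneg (hz'.1 i)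
  obtain ⟨y, hy, hle⟩ :=
    h (subset_upperClosure (a := fun i => (z' i).toNat) (by rwa [Set.mem_preimage, hcast]))
  exact ⟨_, hy, fun i => hcast ▸ Nat.cast_le.2 (hle i)⟩

theorem fiber_eq_add_fiber_sub {b b' : Fin d → ℤ}
    (h : ∀ z' ∈ fiber A b', ∃ z ∈ fiber A b, z ≤ z') :
    fiber A b' = fiber A b + fiber A (b' - b) := by
  refine Set.Subset.antisymm (fun z' hz' => ?_) ?_
  · obtain ⟨z, hz, hle⟩ := h z' hz'
    refine ⟨z, hz, z' - z, ⟨sub_nonneg.2 hle, ?_⟩, add_sub_cancel z z'⟩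
    rw [Matrix.mulVec_sub, hz'.2, hz.2]
  · rintro _ ⟨z₁, hz₁, z₂, hz₂, rfl⟩
    exact ⟨add_nonneg hz₁.1 hz₂.1, by rw [Matrix.mulVec_add, hz₁.2, hz₂.2, add_sub_cancel]⟩

theorem IsAtomicFiber.eq_of_fiberUpperClosure_le {M : AddSubmonoid (Fin d → ℤ)}
    {b b' : Fin d → ℤ} (hb' : IsAtomicFiber A M b') (hb : b ∈ M) (hb0 : b ≠ 0) (hsub : b' - b ∈ M)
    (h : fiberUpperClosure A b ≤ fiberUpperClosure A b') : b = b' := by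
  by_contra hne
  refine hb'.2 ⟨b, b' - b, hb, hsub, hb0, sub_ne_zero.2 (Ne.symm hne), (add_sub_cancel b b').symm,
    fiber_eq_add_fiber_sub fun _ => exists_le_of_fiberUpperClosure_le h⟩

end Fiber

theorem finite_setOf_isAtomicFiber {d n : ℕ} (A : Matrix (Fin d) (Fin n) ℤ)
    {M : AddSubmonoid (Fin d → ℤ)} (hM : M.FG) : {b | IsAtomicFiber A M b}.Finite := by
  have hwqo : WellQuasiOrdered fun b b' : M =>
      fiberUpperClosure A b ≤ fiberUpperClosure A b' ∧ (b' : Fin d → ℤ) - b ∈ M := fun f =>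
    (wellQuasiOrdered_le.prod hM.wellQuasiOrdered_sub_mem) fun i => (fiberUpperClosure A (f i), f i)
  have hfin : (Subtype.val '' {b : M | IsAtomicFiber A M b ∧ (b : Fin d → ℤ) ≠ 0}).Finite :=
    hwqo.finite_image fun b ⟨_, hb0⟩ _ ⟨hb', _⟩ ⟨hle, hsub⟩ =>
      hb'.eq_of_fiberUpperClosure_le b.2 hb0 hsub hle
  refine (hfin.insert 0).subset fun b hb => ?_
  rcases eq_or_ne b 0 with rfl | hb0
  · exact Set.mem_insert _ _
  · exact Set.mem_insert_of_mem _ ⟨⟨b, hb.1⟩, ⟨hb, hb0⟩, rfl⟩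

/-- For a finitely generated monoid `M ⊆ ℤ^d` and a matrix `A ∈ ℤ^{d×n}`, there are only
finitely many fibers of `A` that are atomic with respect to `M`. -/
theorem finitely_many_atomic_fibers {d n : ℕ} (A : Matrix (Fin d) (Fin n) ℤ)
    (M : AddSubmonoid (Fin d → ℤ)) (hM : M.FG) :
    Set.Finite {S : Set (Fin n → ℤ) | ∃ b : Fin d → ℤ, IsAtomicFiber A M b ∧ S = fiber A b} :=
  ((finite_setOf_isAtomicFiber A hM).image (fiber A)).subset fun _ ⟨b, hb, hS⟩ => ⟨b, hb, hS.symm⟩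
end

section
/- Let W = (W̄, −Id)ᵀ ∈ ℤ^{(m+n)×n} (the rows of W̄ ∈ ℤ^{m×n} followed by the rows of minus the n×n identity matrix) be such that the positive hull of the rows of W is ℝ^n, and let Ψ = {u = (ū, 0) ∈ ℤ^{m+n} : ū ∈ ℤ^m}. Let M ⊆ Ψ be the monoid generated by finitely many vectors m₁,…,m_t and let Λ_M be the lattice generated by m₁,…,m_t. Assume W·ℤ^n_{≥0} ∩ Λ_M ⊆ M. Then there are only finitely many polytopes P_u, u ∈ M, that are integrally indecomposable with respect to M. -/
/-!
Every extreme point of `P_u` is the basic point `B⁻¹ u_B` of an invertible square row submatrix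
`B` of `W`, and by Cramer's rule its feasibility for row `i` is the sign of an integer linear form
in `u`. Since the rows of `W` positively span, every `P_u` is a polytope, hence the convex hull of
its extreme points (Krein–Milman); so `P_{u + w} = P_u + P_w` as soon as every basis that is
feasible for `u + w` is feasible for `u` and for `w`. Given infinitely many nonzero indecomposable
`u ∈ M`, write each as `∑ aₗ mₗ` and apply Dickson's lemma to the coefficient vectors together with
the positive and negative parts of all these forms: it produces two of them with `u' = u + w`,
`w ∈ M`, and every form that is nonpositive at `u'` also nonpositive at `u` and at `w`, so that
`P_{u'} = P_u + P_w` is a decomposition.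
-/

open Pointwise

/-- The polytope `P_u = {y ∈ ℝ^n : Wy ≤ u}` for an integral matrix `W` and an integral
right-hand side `u`. -/
def polyOf {ι : Type*} [Fintype ι] {n : ℕ} (W : Matrix ι (Fin n) ℤ) (u : ι → ℤ) :
    Set (Fin n → ℝ) :=
  {y | ∀ i, ∑ j, (W i j : ℝ) * y j ≤ (u i : ℝ)}

open Matrix Set Filter Topology

section Polyhedron

variable {ι κ : Type*} [Fintype κ]

def polyhedron (V : Matrix ι κ ℝ) (c : ι → ℝ) : Set (κ → ℝ) := {y | V *ᵥ y ≤ c}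

def RowsPositivelySpan [Fintype ι] (V : Matrix ι κ ℝ) : Prop :=
  ∀ x : κ → ℝ, ∃ μ : ι → ℝ, (∀ i, 0 ≤ μ i) ∧ x = ∑ i, μ i • V i

noncomputable def basicPoint [DecidableEq κ] (V : Matrix ι κ ℝ) (b : κ → ι) (c : ι → ℝ) :
    κ → ℝ :=
  (V.submatrix b id)⁻¹ *ᵥ (c ∘ b)

theorem basicPoint_add [DecidableEq κ] (V : Matrix ι κ ℝ) (b : κ → ι) (c c' : ι → ℝ) :
    basicPoint V b (c + c') = basicPoint V b c + basicPoint V b c' :=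
  mulVec_add _ _ _

namespace polyhedron

variable (V : Matrix ι κ ℝ)

theorem convex (c : ι → ℝ) : Convex ℝ (polyhedron V c) := by
  intro y hy z hz a b ha hb hab
  calc V *ᵥ (a • y + b • z) = a • V *ᵥ y + b • V *ᵥ z := by
        rw [mulVec_add, mulVec_smul, mulVec_smul]
    _ ≤ a • c + b • c :=
        add_le_add (smul_le_smul_of_nonneg_left hy ha) (smul_le_smul_of_nonneg_left hz hb)
    _ = c := by rw [← add_smul, hab, one_smul]

theorem isClosed (c : ι → ℝ) : IsClosed (polyhedron V c) :=
  isClosed_le (Continuous.matrix_mulVec continuous_const continuous_id) continuous_const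

theorem add_subset (c c' : ι → ℝ) :
    polyhedron V c + polyhedron V c' ⊆ polyhedron V (c + c') := by
  rintro _ ⟨y, hy, z, hz, rfl⟩
  rw [polyhedron, mem_ofPred_eq, mulVec_add]
  exact add_le_add hy hz

theorem dotProduct_le [Fintype ι] {c : ι → ℝ} {y : κ → ℝ} (hy : y ∈ polyhedron V c)
    {μ : ι → ℝ} (hμ : ∀ i, 0 ≤ μ i) : (∑ i, μ i • V i) ⬝ᵥ y ≤ μ ⬝ᵥ c := by
  rw [sum_dotProduct]
  exact Finset.sum_le_sum fun i _ => by
    rw [smul_dotProduct, smul_eq_mul]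
    exact mul_le_mul_of_nonneg_left (hy i) (hμ i)

theorem isCompact [Fintype ι] (hV : RowsPositivelySpan V) (c : ι → ℝ) :
    IsCompact (polyhedron V c) := by
  classical
  choose μ hμ hsum using hV
  refine (isCompact_univ_pi fun j => isCompact_Icc (a := -(μ (-Pi.single j 1) ⬝ᵥ c))
    (b := μ (Pi.single j 1) ⬝ᵥ c)).of_isClosed_subset (isClosed V c) fun y hy j _ => ⟨?_, ?_⟩
  · have := dotProduct_le V hy (hμ (-Pi.single j 1))
    rw [← hsum, neg_dotProduct, single_one_dotProduct] at this
    exact neg_le.mp this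
  · have := dotProduct_le V hy (hμ (Pi.single j 1))
    rwa [← hsum, single_one_dotProduct] at this

theorem exists_pos_add_smul_mem_sub_smul_mem [Finite ι] {c : ι → ℝ} {y d : κ → ℝ}
    (hy : y ∈ polyhedron V c) (hd : ∀ i, (V *ᵥ y) i = c i → (V *ᵥ d) i = 0) :
    ∃ t : ℝ, 0 < t ∧ y + t • d ∈ polyhedron V c ∧ y - t • d ∈ polyhedron V c := by
  have hline (s : ℝ) (i : ι) : (V *ᵥ (y + s • d)) i = (V *ᵥ y) i + s * (V *ᵥ d) i := by
    rw [mulVec_add, mulVec_smul, Pi.add_apply, Pi.smul_apply, smul_eq_mul]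
  have hnear : ∀ᶠ s in 𝓝 (0 : ℝ), y + s • d ∈ polyhedron V c := by
    refine eventually_all.2 fun i => ?_
    rcases (hy i).eq_or_lt with htight | hslack
    · exact Eventually.of_forall fun s => by rw [hline, hd i htight, mul_zero, add_zero, htight]
    · have hcont : Continuous fun s : ℝ => (V *ᵥ y) i + s * (V *ᵥ d) i := by fun_prop
      filter_upwards [hcont.continuousAt.eventually_lt continuousAt_const (by simpa using hslack)]
        with s hs using (hline s i).trans_le hs.le
  have hnear' : ∀ᶠ s in 𝓝 (0 : ℝ), y + s • d ∈ polyhedron V c ∧ y - s • d ∈ polyhedron V c := by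
    refine hnear.and ?_
    filter_upwards [(continuous_neg.tendsto' (0 : ℝ) 0 neg_zero).eventually hnear] with s hs
    rwa [neg_smul, ← sub_eq_add_neg] at hs
  obtain ⟨t, hmem, ht⟩ := ((hnear'.filter_mono nhdsWithin_le_nhds).and
    (self_mem_nhdsWithin : ∀ᶠ s in 𝓝[>] (0 : ℝ), 0 < s)).exists
  exact ⟨t, ht, hmem⟩

theorem span_tight_rows_eq_top [Finite ι] {c : ι → ℝ} {y : κ → ℝ}
    (hy : y ∈ (polyhedron V c).extremePoints ℝ) :
    Submodule.span ℝ (V '' {i | (V *ᵥ y) i = c i}) = ⊤ := by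
  classical
  by_contra hS
  obtain ⟨f, hf0, hker⟩ := Submodule.exists_le_ker_of_lt_top _ (lt_top_iff_ne_top.2 hS)
  set d : κ → ℝ := fun j => f (Pi.single j 1)
  have hf (z : κ → ℝ) : f z = z ⬝ᵥ d := by
    rw [LinearMap.pi_apply_eq_sum_univ f z, dotProduct]
    refine Finset.sum_congr rfl fun j _ => ?_
    rw [smul_eq_mul]
    congr 2
    ext k
    simp [Pi.single_apply, eq_comm]
  have hd0 : d ≠ 0 := fun h => hf0 (LinearMap.ext fun z => by rw [hf, h, dotProduct_zero]; rfl)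
  have hd : ∀ i, (V *ᵥ y) i = c i → (V *ᵥ d) i = 0 := fun i hi => by
    rw [mulVec, ← hf]
    exact hker (Submodule.subset_span ⟨i, hi, rfl⟩)
  obtain ⟨t, ht, hplus, hminus⟩ :=
    exists_pos_add_smul_mem_sub_smul_mem V (extremePoints_subset hy) hd
  have hseg : y ∈ openSegment ℝ (y + t • d) (y - t • d) :=
    ⟨1 / 2, 1 / 2, by norm_num, by norm_num, by norm_num, by module⟩
  have := ((mem_extremePoints.1 hy).2 _ hplus _ hminus hseg).1
  exact hd0 ((smul_eq_zero.1 (add_eq_left.1 this)).resolve_left ht.ne')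

variable [DecidableEq κ]

theorem exists_basicPoint_eq {c : ι → ℝ} {y : κ → ℝ}
    (hspan : Submodule.span ℝ (V '' {i | (V *ᵥ y) i = c i}) = ⊤) :
    ∃ b : κ → ι, IsUnit (V.submatrix b id).det ∧ basicPoint V b c = y := by
  let B := Module.Basis.ofSpan hspan.ge
  let e := B.indexEquiv (Pi.basisFun ℝ κ)
  have hrow (k : κ) : ∃ i, (V *ᵥ y) i = c i ∧ V i = B (e.symm k) :=
    Module.Basis.ofSpan_subset hspan.ge (mem_range_self _)
  choose b hbtight hbrow using hrow
  have hli : LinearIndependent ℝ (fun k => V (b k)) := by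
    simp_rw [hbrow]
    exact B.linearIndependent.comp e.symm e.symm.injective
  have hunit : IsUnit (V.submatrix b id) := linearIndependent_rows_iff_isUnit.1 hli
  refine ⟨b, (isUnit_iff_isUnit_det _).1 hunit, ?_⟩
  have := hunit.invertible
  exact inv_mulVec_eq_vec (funext fun k => (hbtight k).symm)

theorem add_eq_of_basicPoint_mem [Fintype ι] (hV : RowsPositivelySpan V) (c c' : ι → ℝ)
    (h : ∀ b : κ → ι, IsUnit (V.submatrix b id).det →
      basicPoint V b (c + c') ∈ polyhedron V (c + c') →
        basicPoint V b c ∈ polyhedron V c ∧ basicPoint V b c' ∈ polyhedron V c') :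
    polyhedron V (c + c') = polyhedron V c + polyhedron V c' := by
  refine Subset.antisymm ?_ (add_subset V c c')
  rw [← closure_convexHull_extremePoints (isCompact V hV (c + c')) (convex V (c + c'))]
  refine closure_minimal (convexHull_min ?_ ((convex V c).add (convex V c')))
    ((isCompact V hV c).add (isCompact V hV c')).isClosed
  intro y hy
  obtain ⟨b, hb, rfl⟩ := exists_basicPoint_eq V (span_tight_rows_eq_top V hy)
  obtain ⟨h₁, h₂⟩ := h b hb (extremePoints_subset hy)
  rw [basicPoint_add]
  exact add_mem_add h₁ h₂

end polyhedron

end Polyhedron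

section IntegralPolytope

variable {ι κ : Type*} [Fintype κ] [DecidableEq κ]

/-- `det² * ((W x) i - u i)` for the basic point `x` of `b` (see `cast_feasibilityDefect`): the
factor `det²` clears the denominator of Cramer's rule without changing the sign. -/
def feasibilityDefect (W : Matrix ι κ ℤ) (b : κ → ι) (i : ι) : (ι → ℤ) →+ ℤ :=
  AddMonoidHom.mk' (fun u => (W.submatrix b id).det *
      ((W *ᵥ (W.submatrix b id).cramer (u ∘ b)) i - (W.submatrix b id).det * u i)) fun u v => by
    simp only [Pi.add_apply, Pi.add_comp, map_add, mulVec_add]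
    ring

theorem cramer_map_intCast (A : Matrix κ κ ℤ) (v : κ → ℤ) :
    (A.map (Int.cast : ℤ → ℝ)).cramer (Int.cast ∘ v) = Int.cast ∘ A.cramer v := by
  ext k
  rw [cramer_eq_adjugate_mulVec, cramer_eq_adjugate_mulVec, Function.comp_apply]
  have hadj : (A.map (Int.cast : ℤ → ℝ)).adjugate = A.adjugate.map Int.cast :=
    ((Int.castRingHom ℝ).map_adjugate A).symm
  rw [hadj]
  exact ((Int.castRingHom ℝ).map_mulVec _ _ k).symm

theorem det_submatrix_map_intCast (W : Matrix ι κ ℤ) (b : κ → ι) :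
    ((W.map (Int.cast : ℤ → ℝ)).submatrix b id).det = (W.submatrix b id).det :=
  ((Int.castRingHom ℝ).map_det _).symm

theorem cast_feasibilityDefect (W : Matrix ι κ ℤ) (b : κ → ι) (i : ι) (u : ι → ℤ)
    (hdet : IsUnit ((W.map (Int.cast : ℤ → ℝ)).submatrix b id).det) :
    (feasibilityDefect W b i u : ℝ) = ((W.submatrix b id).det : ℝ) ^ 2 *
      ((W.map Int.cast *ᵥ basicPoint (W.map Int.cast) b (Int.cast ∘ u)) i - u i) := by
  let B := W.submatrix b id
  have hscaled : (B.det : ℝ) • basicPoint (W.map Int.cast) b (Int.cast ∘ u) =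
      Int.cast ∘ B.cramer (u ∘ b) := by
    rw [basicPoint, ← det_submatrix_map_intCast, det_smul_inv_mulVec_eq_cramer _ _ hdet]
    exact cramer_map_intCast B (u ∘ b)
  have hrow : (B.det : ℝ) * (W.map Int.cast *ᵥ basicPoint (W.map Int.cast) b (Int.cast ∘ u)) i =
      ((W *ᵥ B.cramer (u ∘ b)) i : ℝ) := by
    rw [← smul_eq_mul, ← Pi.smul_apply, ← mulVec_smul, hscaled]
    exact ((Int.castRingHom ℝ).map_mulVec W _ i).symm
  simp only [feasibilityDefect, AddMonoidHom.mk'_apply, Int.cast_mul, Int.cast_sub]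
  rw [← hrow]
  ring

theorem basicPoint_mem_polyhedron_iff (W : Matrix ι κ ℤ) (b : κ → ι) (u : ι → ℤ)
    (hdet : IsUnit ((W.map (Int.cast : ℤ → ℝ)).submatrix b id).det) :
    basicPoint (W.map Int.cast) b (Int.cast ∘ u) ∈ polyhedron (W.map Int.cast) (Int.cast ∘ u) ↔
      ∀ i, feasibilityDefect W b i u ≤ 0 := by
  have hpos : (0 : ℝ) < ((W.submatrix b id).det : ℝ) ^ 2 := by
    rw [← det_submatrix_map_intCast]
    exact pow_two_pos_of_ne_zero hdet.ne_zero
  refine forall_congr' fun i => ?_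
  rw [← Int.cast_nonpos (R := ℝ), cast_feasibilityDefect W b i u hdet, ← sub_nonpos]
  simpa only [mul_zero, Function.comp_apply] using (mul_le_mul_iff_of_pos_left (c := 0) hpos).symm

theorem polyOf_add_eq [Fintype ι] {n : ℕ} (W : Matrix ι (Fin n) ℤ)
    (hW : RowsPositivelySpan (W.map (Int.cast : ℤ → ℝ))) {u₁ u₂ : ι → ℤ}
    (h : ∀ b i, feasibilityDefect W b i (u₁ + u₂) ≤ 0 →
      feasibilityDefect W b i u₁ ≤ 0 ∧ feasibilityDefect W b i u₂ ≤ 0) :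
    polyOf W (u₁ + u₂) = polyOf W u₁ + polyOf W u₂ := by
  have hcast : (Int.cast ∘ (u₁ + u₂) : ι → ℝ) = Int.cast ∘ u₁ + Int.cast ∘ u₂ := by
    ext i
    simp
  change polyhedron _ (Int.cast ∘ (u₁ + u₂)) = polyhedron _ _ + polyhedron _ _
  rw [hcast]
  refine polyhedron.add_eq_of_basicPoint_mem _ hW _ _ fun b hb hfeas => ?_
  rw [← hcast, basicPoint_mem_polyhedron_iff W b _ hb] at hfeas
  rw [basicPoint_mem_polyhedron_iff W b _ hb, basicPoint_mem_polyhedron_iff W b _ hb]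
  exact ⟨fun i => (h b i (hfeas i)).1, fun i => (h b i (hfeas i)).2⟩

end IntegralPolytope

theorem AddSubmonoid.exists_lt_eq_add_of_mem_closure_range {G K : Type*} [AddCommGroup G]
    [Finite K] {t : ℕ} (ms : Fin t → G) (L : K → G →+ ℤ) (u : ℕ → G)
    (hu : ∀ k, u k ∈ closure (range ms)) :
    ∃ j k, j < k ∧ ∃ w ∈ closure (range ms), u k = u j + w ∧
      ∀ q, L q (u k) ≤ 0 → L q (u j) ≤ 0 ∧ L q w ≤ 0 := by
  choose a ha using fun k => exists_of_mem_closure_range ms (u k) (hu k)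
  obtain ⟨j, k, hjk, hale, hLpos, hLneg⟩ := wellQuasiOrdered_le fun k =>
    (a k, fun q => (L q (u k)).toNat, fun q => (-L q (u k)).toNat)
  set w := ∑ l, (a k l - a j l) • ms l
  have hw : w ∈ closure (range ms) :=
    sum_mem _ fun l _ => nsmul_mem (subset_closure (mem_range_self l)) _
  have hsplit : u k = u j + w := by
    rw [ha j, ha k, ← Finset.sum_add_distrib]
    exact Finset.sum_congr rfl fun l _ => by rw [← add_smul, Nat.add_sub_cancel' (hale l)]
  refine ⟨j, k, hjk, w, hw, hsplit, fun q hq => ?_⟩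
  have hLw : L q (u k) = L q (u j) + L q w := by rw [hsplit, map_add]
  have hpos : (L q (u j)).toNat ≤ (L q (u k)).toNat := hLpos q
  have hneg : (-L q (u j)).toNat ≤ (-L q (u k)).toNat := hLneg q
  omega

def IsIntegrallyDecomposable {ι : Type*} [Fintype ι] {n : ℕ} (W : Matrix ι (Fin n) ℤ)
    (M : AddSubmonoid (ι → ℤ)) (u : ι → ℤ) : Prop :=
  ∃ u₁ u₂ : ι → ℤ, u₁ ∈ M ∧ u₂ ∈ M ∧ u₁ ≠ 0 ∧ u₂ ≠ 0 ∧ u = u₁ + u₂ ∧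
    polyOf W u = polyOf W u₁ + polyOf W u₂

theorem finite_setOf_not_isIntegrallyDecomposable {ι : Type*} [Fintype ι] {n t : ℕ}
    (W : Matrix ι (Fin n) ℤ) (hW : RowsPositivelySpan (W.map (Int.cast : ℤ → ℝ)))
    (ms : Fin t → ι → ℤ) :
    {u | u ∈ AddSubmonoid.closure (range ms) ∧
      ¬ IsIntegrallyDecomposable W (AddSubmonoid.closure (range ms)) u}.Finite := by
  refine Finite.of_sdiff ?_ (finite_singleton 0)
  by_contra hinf
  let u := Set.Infinite.natEmbedding _ hinf
  obtain ⟨j, k, hjk, w, hw, hsplit, hsign⟩ := AddSubmonoid.exists_lt_eq_add_of_mem_closure_range ms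
    (fun q : (Fin n → ι) × ι => feasibilityDefect W q.1 q.2) (fun k => u k) fun k => (u k).2.1.1
  have hw0 : w ≠ 0 := by
    rintro rfl
    rw [add_zero] at hsplit
    exact hjk.ne' (u.injective (Subtype.ext hsplit))
  obtain ⟨⟨-, hk_indec⟩, -⟩ := (u k).2
  obtain ⟨⟨hjM, -⟩, hj0⟩ := (u j).2
  rw [hsplit] at hsign
  exact hk_indec ⟨u j, w, hjM, hw, hj0, hw0, hsplit,
    hsplit ▸ polyOf_add_eq W hW fun b i => hsign (b, i)⟩

theorem finitely_many_indecomposable_polytopes_wrt_monoid_general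
    {m n t : ℕ} (Wbar : Matrix (Fin m) (Fin n) ℤ)
    -- generators m₁, …, m_t of the monoid M, lying in Ψ (last n coordinates vanish)
    (ms : Fin t → (Fin m ⊕ Fin n → ℤ))
    -- the rows of W = (W̄, −Id)ᵀ positively span ℝ^n
    (hpos : ∀ x : Fin n → ℝ, ∃ μ : Fin m ⊕ Fin n → ℝ, (∀ i, 0 ≤ μ i) ∧
      x = ∑ i, μ i • (fun j => ((Matrix.fromRows Wbar (-1) : Matrix (Fin m ⊕ Fin n) (Fin n) ℤ) i j : ℝ))) :
    Set.Finite {P : Set (Fin n → ℝ) | ∃ u : Fin m ⊕ Fin n → ℤ,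
      u ∈ AddSubmonoid.closure (Set.range ms) ∧
      (¬ ∃ u₁ u₂ : Fin m ⊕ Fin n → ℤ,
        u₁ ∈ AddSubmonoid.closure (Set.range ms) ∧ u₂ ∈ AddSubmonoid.closure (Set.range ms) ∧
        u₁ ≠ 0 ∧ u₂ ≠ 0 ∧ u = u₁ + u₂ ∧
        polyOf (Matrix.fromRows Wbar (-1)) u =
          polyOf (Matrix.fromRows Wbar (-1)) u₁ + polyOf (Matrix.fromRows Wbar (-1)) u₂) ∧
      P = polyOf (Matrix.fromRows Wbar (-1)) u} := by
  refine ((finite_setOf_not_isIntegrallyDecomposable _ hpos ms).image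
    (polyOf (Matrix.fromRows Wbar (-1)))).subset ?_
  rintro _ ⟨u, hu, hind, rfl⟩
  exact ⟨u, ⟨hu, hind⟩, rfl⟩

/-- For `W = (W̄, −Id)ᵀ` with positively spanning rows, a finitely generated monoid
`M ⊆ Ψ = ℤ^m × {0}` generated by `m₁, …, m_t` with lattice `Λ_M`, the assumption
`W·ℤ^n_{≥0} ∩ Λ_M ⊆ M` implies that there are only finitely many polytopes `P_u`,
`u ∈ M`, that are integrally indecomposable with respect to `M`. -/
theorem finitely_many_indecomposable_polytopes_wrt_monoid
    {m n t : ℕ} (Wbar : Matrix (Fin m) (Fin n) ℤ)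
    -- generators m₁, …, m_t of the monoid M, lying in Ψ (last n coordinates vanish)
    (ms : Fin t → (Fin m ⊕ Fin n → ℤ))
    (hms : ∀ j i, ms j (Sum.inr i) = 0)
    -- the rows of W = (W̄, −Id)ᵀ positively span ℝ^n
    (hpos : ∀ x : Fin n → ℝ, ∃ μ : Fin m ⊕ Fin n → ℝ, (∀ i, 0 ≤ μ i) ∧
      x = ∑ i, μ i • (fun j => ((Matrix.fromRows Wbar (-1) : Matrix (Fin m ⊕ Fin n) (Fin n) ℤ) i j : ℝ)))
    -- W·ℤ^n_{≥0} ∩ Λ_M ⊆ M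
    (hWM : ∀ z : Fin n → ℤ, 0 ≤ z →
      (Matrix.fromRows Wbar (-1)).mulVec z ∈ AddSubgroup.closure (Set.range ms) →
      (Matrix.fromRows Wbar (-1)).mulVec z ∈ AddSubmonoid.closure (Set.range ms)) :
    Set.Finite {P : Set (Fin n → ℝ) | ∃ u : Fin m ⊕ Fin n → ℤ,
      u ∈ AddSubmonoid.closure (Set.range ms) ∧
      (¬ ∃ u₁ u₂ : Fin m ⊕ Fin n → ℤ,
        u₁ ∈ AddSubmonoid.closure (Set.range ms) ∧ u₂ ∈ AddSubmonoid.closure (Set.range ms) ∧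
        u₁ ≠ 0 ∧ u₂ ≠ 0 ∧ u = u₁ + u₂ ∧
        polyOf (Matrix.fromRows Wbar (-1)) u =
          polyOf (Matrix.fromRows Wbar (-1)) u₁ + polyOf (Matrix.fromRows Wbar (-1)) u₂) ∧
      P = polyOf (Matrix.fromRows Wbar (-1)) u} :=
  finitely_many_indecomposable_polytopes_wrt_monoid_general Wbar ms hpos
end

section
/- Let N = (V, A, d, c) be a multicommodity network and let D be the constraint matrix of the path formulation, so that the fiber P^I_{D,b} with b = (d, c) is the set of vectors (y, s) of nonnegative integers with Σ_{p ∈ Π_l} y_p^l = d_l for every commodity l and Σ_{l=1}^k Σ_{p ∈ Π_l, a ∈ p} y_p^l + s_a = c_a for every arc a. If N is irreducible with respect to the path formulation, then P^I_{D,b} is an atomic fiber: there are no b₁ = (d₁, c₁) ≠ 0 and b₂ = (d₂, c₂) ≠ 0 with b = b₁ + b₂ and P^I_{D,b} = P^I_{D,b₁} + P^I_{D,b₂} (Minkowski sum). -/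
open Pointwise

/-- `p` is a (simple) directed path from `u` to `w` in the multidigraph on vertex set `V`
whose arcs `a : A` go from `src a` to `tgt a`. -/
def IsPath {V A : Type*} (src tgt : A → V) (u w : V) (p : List A) : Prop :=
  ∃ hp : p ≠ [],
    List.Chain' (fun a b => tgt a = src b) p ∧
    src (p.head hp) = u ∧ tgt (p.getLast hp) = w ∧
    (p.map src ++ [w]).Nodup

/-- `p` is a (simple) directed cycle. -/
def IsCycle {V A : Type*} (src tgt : A → V) (p : List A) : Prop :=
  ∃ hp : p ≠ [],
    List.Chain' (fun a b => tgt a = src b) p ∧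
    tgt (p.getLast hp) = src (p.head hp) ∧
    (p.map src).Nodup

/-- The digraph given by `src`, `tgt` is connected (in the weak sense). -/
def DigraphConnected {V A : Type*} (src tgt : A → V) : Prop :=
  ∀ u v : V, Relation.ReflTransGen
    (fun x y => ∃ a, (src a = x ∧ tgt a = y) ∨ (src a = y ∧ tgt a = x)) u v

/-- The arc flow of commodity `l` on arc `a` induced by the path flows `y`. -/
noncomputable def pathFlow {V A : Type*} (src tgt : A → V) {k : ℕ} (s t : Fin k → V)
    (y : Fin k → List A → ℕ) (l : Fin k) (a : A) : ℕ :=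
  ∑ᶠ p ∈ {p : List A | IsPath src tgt (s l) (t l) p ∧ a ∈ p}, y l p

/-- The fiber `P^I_{D,b}`, `b = (d, c)`, of the path formulation: all pairs `(y, s)` of
nonnegative integer path flows (supported on the paths `Π_l`) and slacks satisfying the
demand equations `Σ_{p ∈ Π_l} y_p^l = d_l` and the capacity equations
`Σ_l Σ_{p ∈ Π_l, a ∈ p} y_p^l + s_a = c_a`. -/
noncomputable def pathFiber {V A : Type*} (src tgt : A → V) {k : ℕ} (s t : Fin k → V)
    (d : Fin k → ℕ) (cap : A → ℕ) : Set ((Fin k → List A → ℕ) × (A → ℕ)) :=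
  {ys | (∀ l p, ¬ IsPath src tgt (s l) (t l) p → ys.1 l p = 0) ∧
        (∀ l, ∑ᶠ p ∈ {p : List A | IsPath src tgt (s l) (t l) p}, ys.1 l p = d l) ∧
        (∀ a, (∑ l, pathFlow src tgt s t ys.1 l a) + ys.2 a = cap a)}

/-- A path solution is non-cyclic if for each commodity the induced arc flow carries no
directed cycle all of whose arcs have positive flow. -/
def NonCyclicPath {V A : Type*} (src tgt : A → V) {k : ℕ} (s t : Fin k → V)
    (ys : (Fin k → List A → ℕ) × (A → ℕ)) : Prop :=
  ∀ l c, IsCycle src tgt c → ∃ a ∈ c, pathFlow src tgt s t ys.1 l a = 0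

/-- `FN^P(N)`: the set of non-cyclic feasible integer solutions of the multicommodity flow
problem on `N = (V, A, d, c)` w.r.t. the path formulation. -/
noncomputable def FNP {V A : Type*} (src tgt : A → V) {k : ℕ} (s t : Fin k → V)
    (d : Fin k → ℕ) (cap : A → ℕ) : Set ((Fin k → List A → ℕ) × (A → ℕ)) :=
  {ys ∈ pathFiber src tgt s t d cap | NonCyclicPath src tgt s t ys}


lemma isPath_finite {V A : Type*} [Fintype A] (src tgt : A → V) (u w : V) (S : Set (List A))
    (hS : ∀ p ∈ S, IsPath src tgt u w p) : S.Finite := by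
  apply (List.finite_length_le A (Fintype.card A)).subset
  intro p hp
  obtain ⟨hne, _, _, _, hnd⟩ := hS p hp
  have : p.Nodup := (List.Nodup.of_map src ((List.nodup_append.mp hnd).1))
  simpa using this.length_le_card

lemma pathFlow_add {V A : Type*} [Fintype A] (src tgt : A → V) {k : ℕ} (s t : Fin k → V)
    (y₁ y₂ : Fin k → List A → ℕ) (l : Fin k) (a : A) :
    pathFlow src tgt s t (y₁ + y₂) l a =
      pathFlow src tgt s t y₁ l a + pathFlow src tgt s t y₂ l a := by
  unfold pathFlow
  have hfin : {p : List A | IsPath src tgt (s l) (t l) p ∧ a ∈ p}.Finite :=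
    isPath_finite src tgt (s l) (t l) _ (fun p hp => hp.1)
  have := finsum_mem_add_distrib (f := fun p => y₁ l p) (g := fun p => y₂ l p) hfin
  simpa using this

/-- If the multicommodity network `N = (V, A, d, c)` is irreducible w.r.t. the path
formulation, then the fiber `P^I_{D,b}` with `b = (d, c)` is an atomic fiber. -/
theorem atomic_fiber_of_irreducible_network
    {V A : Type*} [Fintype V] [Fintype A]
    (src tgt : A → V) (hconn : DigraphConnected src tgt)
    {k : ℕ} (s t : Fin k → V)
    (d : Fin k → ℕ) (cap : A → ℕ)
    -- N is irreducible w.r.t. the path formulation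
    (hirr : ¬ ∃ (d₁ d₂ : Fin k → ℕ) (c₁ c₂ : A → ℕ),
      d = d₁ + d₂ ∧ cap = c₁ + c₂ ∧
      ¬ (d₁ = 0 ∧ c₁ = 0) ∧ ¬ (d₂ = 0 ∧ c₂ = 0) ∧
      FNP src tgt s t d cap ⊆ FNP src tgt s t d₁ c₁ + FNP src tgt s t d₂ c₂) :
    -- the fiber of b = (d, c) is atomic
    ¬ ∃ (d₁ d₂ : Fin k → ℕ) (c₁ c₂ : A → ℕ),
      ¬ (d₁ = 0 ∧ c₁ = 0) ∧ ¬ (d₂ = 0 ∧ c₂ = 0) ∧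
      d = d₁ + d₂ ∧ cap = c₁ + c₂ ∧
      pathFiber src tgt s t d cap =
        pathFiber src tgt s t d₁ c₁ + pathFiber src tgt s t d₂ c₂ := by
  rintro ⟨d₁, d₂, c₁, c₂, h₁, h₂, hd, hc, hfib⟩
  apply hirr
  refine ⟨d₁, d₂, c₁, c₂, hd, hc, h₁, h₂, ?_⟩
  rintro ys ⟨hmem, hnc⟩
  rw [hfib] at hmem
  obtain ⟨y₁, hy₁, y₂, hy₂, hsum⟩ := hmem
  have h1 : ys.1 = y₁.1 + y₂.1 := by rw [← hsum]; rfl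
  refine ⟨y₁, ⟨hy₁, ?_⟩, y₂, ⟨hy₂, ?_⟩, hsum⟩ <;>
  · intro l c hcyc
    obtain ⟨a, ha, h0⟩ := hnc l c hcyc
    rw [h1, pathFlow_add] at h0
    exact ⟨a, ha, by omega⟩
end
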